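/- The algebra A^d_{p,p} is spanned by the sandwiched projectors Q^(k): A^d_{p,p} = span_ℂ{ (V_σ V'_τ) Q^(k) (V_π V'_ρ) : 0 ≤ k ≤ p and σ, τ, π, ρ ∈ S_p }. -/

import Mathlib

open Matrix Kronecker

namespace WBA

/-- Configurations of `p` qudits of local dimension `d`. -/
abbrev Conf (d p : ℕ) := Fin p → Fin d

/-- Operators on `H = (ℂ^d)^{⊗ 2p}`, indexed by pairs (unprimed configuration, primed
configuration). -/
abbrev Op (d p : ℕ) := Matrix (Conf d p × Conf d p) (Conf d p × Conf d p) ℂ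

/-- The projector `P⁺_{a,c'}` onto the maximally entangled state between unprimed system `a`
and primed system `c`, tensored with the identity elsewhere. -/
noncomputable def Pplus (d p : ℕ) (a c : Fin p) : Op d p :=
  Matrix.of fun xy uv =>
    if xy.1 a = xy.2 c ∧ uv.1 a = uv.2 c ∧ (∀ j, j ≠ a → xy.1 j = uv.1 j) ∧
        (∀ j, j ≠ c → xy.2 j = uv.2 j) then
      (d : ℂ)⁻¹
    else 0

/-- `d • P⁺_{a,c'}`, i.e. the partially transposed swap `V^{t_{c'}}_{(a,c')}`. -/
noncomputable def arc (d p : ℕ) (a c : Fin p) : Op d p := (d : ℂ) • Pplus d p a c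

/-- `V^(k) = ∏_{j=p-k+1}^{p} (d • P⁺_{j,j'})` (product over the last `k` systems;
`V^(0) = 1`). -/
noncomputable def Vop (d p k : ℕ) : Op d p :=
  (((List.range p).filter (fun j => decide (p - k ≤ j))).map
    (fun j => if h : j < p then arc d p ⟨j, h⟩ ⟨j, h⟩ else 1)).prod

/-- `Q^(p) = d^{-p} V^(p)` and `Q^(k) = d^{-k} V^(k) - d^{-(k+1)} V^(k+1)` for `k < p`. -/
noncomputable def Qop (d p k : ℕ) : Op d p :=
  if k = p then ((d : ℂ) ^ p)⁻¹ • Vop d p p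
  else ((d : ℂ) ^ k)⁻¹ • Vop d p k - ((d : ℂ) ^ (k + 1))⁻¹ • Vop d p (k + 1)

/-- Permutation matrix on `(ℂ^d)^{⊗ n}`: sends `e_v` to `e_{v ∘ σ⁻¹}`. -/
noncomputable def permMat (d n : ℕ) (σ : Equiv.Perm (Fin n)) :
    Matrix (Fin n → Fin d) (Fin n → Fin d) ℂ :=
  Matrix.of fun x u => if x = u ∘ ⇑σ⁻¹ then 1 else 0

/-- `V_σ`: permutation of the unprimed factors, identity on the primed factors. -/
noncomputable def VL (d p : ℕ) (σ : Equiv.Perm (Fin p)) : Op d p :=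
  (permMat d p σ) ⊗ₖ (1 : Matrix (Conf d p) (Conf d p) ℂ)

/-- `V'_τ`: permutation of the primed factors, identity on the unprimed factors. -/
noncomputable def VR (d p : ℕ) (τ : Equiv.Perm (Fin p)) : Op d p :=
  (1 : Matrix (Conf d p) (Conf d p) ℂ) ⊗ₖ (permMat d p τ)

/-- Identification of `H` with `(ℂ^d)^{⊗ (p+p)}`. -/
def glue (d p : ℕ) : (Conf d p × Conf d p) ≃ (Fin (p + p) → Fin d) :=
  (Equiv.sumArrowEquivProdArrow (Fin p) (Fin p) (Fin d)).symm.trans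
    (Equiv.arrowCongr finSumFinEquiv (Equiv.refl (Fin d)))

/-- The permutation operator `W_π`, `π ∈ S_{2p}`, permuting all `2p` tensor factors of `H`. -/
noncomputable def Wfull (d p : ℕ) (π : Equiv.Perm (Fin (p + p))) : Op d p :=
  (permMat d (p + p) π).submatrix (glue d p) (glue d p)

/-- Partial transpose over the `p` primed factors:
`⟨x,y|M^Γ|u,v⟩ = ⟨x,v|M|u,y⟩`. -/
noncomputable def ptrans (d p : ℕ) (M : Op d p) : Op d p :=
  Matrix.of fun xy uv => M (xy.1, uv.2) (uv.1, xy.2)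

/-- The algebra `A^d_{p,p}` of partially transposed permutation operators, as a
linear subspace of `End(H)`. -/
noncomputable def Apt (d p : ℕ) : Submodule ℂ (Op d p) :=
  Submodule.span ℂ {M | ∃ π : Equiv.Perm (Fin (p + p)), M = ptrans d p (Wfull d p π)}

/-- Extension of an operator on systems `1,…,p-r,1',…,(p-r)'` by the identity on the
remaining systems. -/
noncomputable def embed (d p r : ℕ) (M : Op d (p - r)) : Op d p :=
  Matrix.of fun xy uv =>
    M (xy.1 ∘ Fin.castLE (Nat.sub_le p r), xy.2 ∘ Fin.castLE (Nat.sub_le p r))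
      (uv.1 ∘ Fin.castLE (Nat.sub_le p r), uv.2 ∘ Fin.castLE (Nat.sub_le p r)) *
    (if ∀ j : Fin p, p - r ≤ (j : ℕ) → xy.1 j = uv.1 j ∧ xy.2 j = uv.2 j then 1 else 0)

/-- The ideal `M̃^(k) = span{ V_σ V'_τ Q^(k) V_π V'_ρ }` of `A^d_{p,p}`. -/
noncomputable def Mtil (d p k : ℕ) : Submodule ℂ (Op d p) :=
  Submodule.span ℂ {M | ∃ σ τ π ρ : Equiv.Perm (Fin p),
    M = VL d p σ * VR d p τ * Qop d p k * (VL d p π * VR d p ρ)}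

/-- Labels for the two irreps of `S_2`: symmetric `S` and antisymmetric `A`. -/
inductive SA
  | S
  | A
deriving DecidableEq

instance instFintypeSA : Fintype SA :=
  ⟨{SA.S, SA.A}, fun x => by cases x <;> simp⟩

/-- The swap operator on `ℂ^d ⊗ ℂ^d`. -/
noncomputable def Fsw (d : ℕ) : Matrix (Conf d 2) (Conf d 2) ℂ :=
  Matrix.of fun x u => if x 0 = u 1 ∧ x 1 = u 0 then 1 else 0

/-- Symmetric and antisymmetric projectors on `ℂ^d ⊗ ℂ^d`. -/
noncomputable def Esm (d : ℕ) : SA → Matrix (Conf d 2) (Conf d 2) ℂ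
  | SA.S => (2 : ℂ)⁻¹ • (1 + Fsw d)
  | SA.A => (2 : ℂ)⁻¹ • (1 - Fsw d)

/-- `E_i ⊗ E_j` on `H = (ℂ^d)^{⊗4}`. -/
noncomputable def EE (d : ℕ) (i j : SA) : Op d 2 := (Esm d i) ⊗ₖ (Esm d j)

/-- `E_i ⊗ 1` on `H = (ℂ^d)^{⊗4}`. -/
noncomputable def EId (d : ℕ) (i : SA) : Op d 2 :=
  (Esm d i) ⊗ₖ (1 : Matrix (Conf d 2) (Conf d 2) ℂ)

/-- Multiplicities `m_S = d(d+1)/2`, `m_A = d(d-1)/2` (real valued). -/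
noncomputable def mR (d : ℕ) : SA → ℝ
  | SA.S => (d : ℝ) * ((d : ℝ) + 1) / 2
  | SA.A => (d : ℝ) * ((d : ℝ) - 1) / 2

/-- Multiplicities `m_S = d(d+1)/2`, `m_A = d(d-1)/2` (complex valued). -/
noncomputable def mC (d : ℕ) : SA → ℂ
  | SA.S => (d : ℂ) * ((d : ℂ) + 1) / 2
  | SA.A => (d : ℂ) * ((d : ℂ) - 1) / 2

/-- `V^(1) = d • P⁺_{2,2'}` for `p = 2`. -/
noncomputable def V1 (d : ℕ) : Op d 2 := arc d 2 1 1

/-- `V^(2) = d² • P⁺_{2,2'} P⁺_{1,1'}` for `p = 2`. -/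
noncomputable def V2 (d : ℕ) : Op d 2 := arc d 2 1 1 * arc d 2 0 0

/-- `Q^(2) = d^{-2} V^(2)` for `p = 2`. -/
noncomputable def Q2 (d : ℕ) : Op d 2 := ((d : ℂ) ^ 2)⁻¹ • V2 d

/-- `Q^(1) = d^{-1} V^(1) - d^{-2} V^(2)` for `p = 2`. -/
noncomputable def Q1 (d : ℕ) : Op d 2 :=
  (d : ℂ)⁻¹ • V1 d - ((d : ℂ) ^ 2)⁻¹ • V2 d

/-- `G^(2)_{kl} = (d²/√(m_k m_l)) (E_k ⊗ 1) Q^(2) (E_l ⊗ 1)`. -/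
noncomputable def G2 (d : ℕ) (k l : SA) : Op d 2 :=
  ((d : ℂ) ^ 2 / ((Real.sqrt (mR d k * mR d l) : ℝ) : ℂ)) • (EId d k * Q2 d * EId d l)

/-- `G^(2) = G^(2)_{SS} + G^(2)_{AA}`. -/
noncomputable def G2sum (d : ℕ) : Op d 2 := G2 d SA.S SA.S + G2 d SA.A SA.A

/-- The Gram coefficients `b_{SS} = (d+2)/(4d)`, `b_{SA} = b_{AS} = 1/4`,
`b_{AA} = (d-2)/(4d)`. -/
noncomputable def bc (d : ℕ) : SA → SA → ℂ
  | SA.S, SA.S => ((d : ℂ) + 2) / (4 * (d : ℂ))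
  | SA.S, SA.A => 1 / 4
  | SA.A, SA.S => 1 / 4
  | SA.A, SA.A => ((d : ℂ) - 2) / (4 * (d : ℂ))

/-- `Ĝ^(1)_{[ij][kl]} = (E_i ⊗ E_j) Q^(1) (E_k ⊗ E_l)`. -/
noncomputable def Ghat1 (d : ℕ) (i j k l : SA) : Op d 2 :=
  EE d i j * Q1 d * EE d k l

/-- `G^(1)_{[ij][kl]} = b_{ij}⁻¹ Ĝ^(1)_{[ij][kl]}`. -/
noncomputable def G1 (d : ℕ) (i j k l : SA) : Op d 2 := (bc d i j)⁻¹ • Ghat1 d i j k l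

/-- `G^(1) = Σ_{ij} G^(1)_{[ij][ij]}`. -/
noncomputable def G1sum (d : ℕ) : Op d 2 := ∑ i : SA, ∑ j : SA, G1 d i j i j

/-- `G^(0)_{ij} = E_i⊗E_j - b_{ij}⁻¹ (E_i⊗E_j)Q^(1)(E_i⊗E_j)
- δ_{ij} (d²/m_i) (E_i⊗1)Q^(2)(E_i⊗1)`. -/
noncomputable def G0 (d : ℕ) (i j : SA) : Op d 2 :=
  EE d i j - (bc d i j)⁻¹ • (EE d i j * Q1 d * EE d i j) -
    (if i = j then (d : ℂ) ^ 2 / mC d i else 0) • (EId d i * Q2 d * EId d i)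

end WBA

/-! The partial transpose `W_π^Γ` is a walled Brauer diagram with the `p` unprimed strands on one
side of the wall and the `p` primed ones on the other. Multiplying by `V_σ V'_τ` on the left and
on the right permutes the strands within each side, and up to such permutations a diagram is
determined by the number `k` of strands crossing the wall: it becomes the diagram joining the last
`k` unprimed and primed systems by cups and caps, which is `V^(k)`. So `A^d_{p,p}` is spanned by
the sandwiched `V^(k)`, and since the `Q^(j)` telescope, `∑_{j ≥ k} Q^(j) = d^{-k} V^(k)`, the
`V^(k)` and the `Q^(k)` span the same space. -/

lemma List.filter_le_range (m n : ℕ) :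
    (List.range n).filter (fun j => decide (m ≤ j)) = List.range' m (n - m) := by
  induction n with
  | zero => simp
  | succ n ih =>
    rw [List.range_succ, List.filter_append, ih]
    by_cases h : m ≤ n
    · rw [show n + 1 - m = n - m + 1 by omega, List.range'_concat]
      simp [h, show m + (n - m) = n by omega]
    · simp [h, show n + 1 - m = 0 by omega, show n - m = 0 by omega]

lemma Fin.card_subtype_le_val (m n : ℕ) : Fintype.card {j : Fin n // m ≤ j.val} = n - m := by
  have hmap : (Finset.univ.filter fun j : Fin n => m ≤ j.val).map Fin.valEmbedding =
      Finset.Ico m n := by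
    ext i
    simp only [Finset.mem_map, Finset.mem_filter, Finset.mem_univ, true_and,
      Fin.valEmbedding_apply, Finset.mem_Ico]
    exact ⟨fun ⟨j, hj, hji⟩ => hji ▸ ⟨hj, j.isLt⟩, fun ⟨hmi, hin⟩ => ⟨⟨i, hin⟩, hmi, rfl⟩⟩
  rw [Fintype.card_subtype, ← Finset.card_map, hmap, Nat.card_Ico]

lemma PEquiv.toMatrix_toPEquiv_kronecker {α β γ δ R : Type*} [DecidableEq β] [DecidableEq δ]
    [MulZeroOneClass R] (e : α ≃ β) (f : γ ≃ δ) :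
    (e.toPEquiv.toMatrix ⊗ₖ f.toPEquiv.toMatrix : Matrix (α × γ) (β × δ) R) =
      (e.prodCongr f).toPEquiv.toMatrix := by
  ext ⟨a, c⟩ ⟨b, d⟩
  simp [PEquiv.toMatrix_apply, ← ite_and, and_comm]

lemma Equiv.Perm.exists_forall_apply_iff {α : Type*} [Fintype α] {P Q : α → Prop}
    [DecidablePred P] [DecidablePred Q] (h : Fintype.card {a // P a} = Fintype.card {a // Q a}) :
    ∃ γ : Equiv.Perm α, ∀ a, Q (γ a) ↔ P a := by
  let e := Fintype.equivOfCardEq h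
  exact ⟨e.extendSubtype, fun a =>
    ⟨fun hQ => by_contra fun hP => e.extendSubtype_not_mem a hP hQ, e.extendSubtype_mem a⟩⟩

lemma Equiv.Perm.card_isLeft_inr_eq {α β : Type*} [Fintype α] [Fintype β]
    (ρ : Equiv.Perm (α ⊕ β)) :
    Fintype.card {b // (ρ (.inr b)).isLeft} = Fintype.card {a // (ρ (.inl a)).isRight} := by
  have hR : Fintype.card {s // (ρ s).isRight} = Fintype.card β :=
    Fintype.card_congr ((ρ.subtypeEquiv fun _ => Iff.rfl).trans Equiv.sumIsRight)
  have hsplit := Fintype.card_congr (Equiv.subtypeSum (p := fun s => (ρ s).isRight))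
  have hβ := Fintype.card_subtype_compl (fun b => (ρ (.inr b)).isRight)
  simp only [Bool.not_eq_true, Sum.isRight_eq_false] at hβ
  have := Fintype.card_subtype_le (fun b => (ρ (.inr b)).isRight)
  rw [Fintype.card_sum] at hsplit
  omega

lemma Submodule.span_iUnion_image_congr {R M N ι : Type*} [Semiring R] [AddCommMonoid M]
    [AddCommMonoid N] [Module R M] [Module R N] (f : ι → M →ₗ[R] N) {s t : Set M}
    (h : Submodule.span R s = Submodule.span R t) :
    Submodule.span R (⋃ i, f i '' s) = Submodule.span R (⋃ i, f i '' t) := by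
  simp only [Submodule.span_iUnion, ← Submodule.map_span, h]

namespace WBA

open Equiv

variable {d p : ℕ}

lemma permMat_eq_toMatrix {n : ℕ} (σ : Perm (Fin n)) :
    permMat d n σ = (σ.symm.arrowCongr (Equiv.refl (Fin d))).toPEquiv.toMatrix := by
  ext x u
  simp only [permMat, Matrix.of_apply, PEquiv.toMatrix_apply, toPEquiv_apply, Option.mem_def,
    Option.some.injEq, Perm.inv_def, eq_comp_symm]
  rfl

lemma VL_mul_VR (σ τ : Perm (Fin p)) :
    VL d p σ * VR d p τ =
      ((σ.symm.arrowCongr (Equiv.refl (Fin d))).prodCongr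
        (τ.symm.arrowCongr (Equiv.refl (Fin d)))).toPEquiv.toMatrix := by
  rw [VL, VR, ← Matrix.mul_kronecker_mul, Matrix.mul_one, Matrix.one_mul, permMat_eq_toMatrix,
    permMat_eq_toMatrix, PEquiv.toMatrix_toPEquiv_kronecker]

/-- `W_π^Γ`, with the `2p` tensor factors indexed by `Fin p ⊕ Fin p` (unprimed systems on the left,
primed ones on the right) and the permutation `ρ` written in that indexing. -/
noncomputable def brauerOp (d : ℕ) (ρ : Perm (Fin p ⊕ Fin p)) : Op d p :=
  Matrix.of fun xy uv => if Sum.elim xy.1 uv.2 ∘ ρ = Sum.elim uv.1 xy.2 then 1 else 0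

lemma ptrans_Wfull (π : Perm (Fin (p + p))) :
    ptrans d p (Wfull d p π) = brauerOp d (finSumFinEquiv.symm.permCongr π) := by
  ext ⟨x, y⟩ ⟨u, v⟩
  refine if_congr ?_ rfl rfl
  change Sum.elim x v ∘ finSumFinEquiv.symm = Sum.elim u y ∘ finSumFinEquiv.symm ∘ π.symm ↔ _
  rw [← Function.comp_assoc, Equiv.eq_comp_symm, Function.comp_assoc, Equiv.eq_comp_symm]
  rfl

lemma Apt_eq_span_brauerOp : Apt d p = Submodule.span ℂ (Set.range (brauerOp d)) := by
  rw [Apt]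
  congr 1
  ext M
  simp only [ptrans_Wfull, Set.mem_range]
  exact ⟨fun ⟨π, h⟩ => ⟨_, h.symm⟩,
    fun ⟨ρ, h⟩ => ⟨finSumFinEquiv.symm.permCongr.symm ρ, by rw [apply_symm_apply, h]⟩⟩

lemma sandwich_brauerOp (σ τ α β : Perm (Fin p)) (ρ : Perm (Fin p ⊕ Fin p)) :
    VL d p σ * VR d p τ * brauerOp d ρ * (VL d p α * VR d p β) =
      brauerOp d (Perm.sumCongr σ β⁻¹ * ρ * Perm.sumCongr α τ⁻¹) := by
  rw [VL_mul_VR, VL_mul_VR, PEquiv.toMatrix_toPEquiv_mul, PEquiv.mul_toMatrix_toPEquiv,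
    Matrix.submatrix_submatrix]
  ext ⟨x, y⟩ ⟨u, v⟩
  refine if_congr ?_ rfl rfl
  have hxv : Sum.elim (x ∘ σ) (v ∘ β.symm) = Sum.elim x v ∘ sumCongr σ β⁻¹ := by
    ext (j | j) <;> rfl
  have huy : Sum.elim (u ∘ α.symm) (y ∘ τ) = Sum.elim u y ∘ (sumCongr α τ⁻¹).symm := by
    ext (j | j) <;> rfl
  change Sum.elim (x ∘ σ) (v ∘ β.symm) ∘ ρ = Sum.elim (u ∘ α.symm) (y ∘ τ) ↔ _
  rw [hxv, huy, Equiv.eq_comp_symm]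
  rfl

lemma brauerOp_one : brauerOp d (1 : Perm (Fin p ⊕ Fin p)) = 1 := by
  ext ⟨x, y⟩ ⟨u, v⟩
  simp [brauerOp, Matrix.one_apply, Sum.elim_eq_iff, eq_comm (a := v)]

/-- Exchanges the last `k` unprimed strands with the last `k` primed ones. -/
def crossLast (p k : ℕ) : Perm (Fin p ⊕ Fin p) :=
  Function.Involutive.toPerm
    (fun s => if p - k ≤ (Sum.elim id id s : Fin p).val then s.swap else s)
    (by rintro (j | j) <;> by_cases h : p - k ≤ j.val <;> simp [h])

lemma crossLast_inl (k : ℕ) (j : Fin p) :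
    crossLast p k (.inl j) = if p - k ≤ j.val then .inr j else .inl j := rfl

lemma crossLast_inr (k : ℕ) (j : Fin p) :
    crossLast p k (.inr j) = if p - k ≤ j.val then .inl j else .inr j := rfl

lemma crossLast_zero : crossLast p 0 = 1 := by
  ext (j | j) <;> simp [crossLast_inl, crossLast_inr]

lemma crossLast_inv (k : ℕ) : (crossLast p k)⁻¹ = crossLast p k :=
  Function.Involutive.toPerm_symm _

lemma brauerOp_crossLast_apply (k : ℕ) (x y u v : Conf d p) :
    brauerOp d (crossLast p k) (x, y) (u, v) =
      if ∀ j : Fin p, if p - k ≤ j.val then x j = y j ∧ u j = v j else x j = u j ∧ y j = v j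
      then 1 else 0 := by
  refine if_congr ?_ rfl rfl
  rw [funext_iff, Sum.forall, ← forall_and]
  refine forall_congr' fun j => ?_
  by_cases h : p - k ≤ j.val <;> simp [crossLast_inl, crossLast_inr, h, eq_comm, and_comm]

lemma arc_apply (a : Fin p) (x y u v : Conf d p) :
    arc d p a a (x, y) (u, v) =
      if x a = y a ∧ u a = v a ∧ (∀ j, j ≠ a → x j = u j) ∧ (∀ j, j ≠ a → y j = v j)
      then 1 else 0 := by
  rw [arc, Matrix.smul_apply, Pplus, Matrix.of_apply, smul_ite, smul_zero, smul_eq_mul,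
    mul_inv_cancel₀ (Nat.cast_ne_zero.2 (x a).pos.ne')]

lemma arc_mul_brauerOp_crossLast {k : ℕ} (hk : k < p) :
    arc d p ⟨p - (k + 1), by omega⟩ ⟨p - (k + 1), by omega⟩ * brauerOp d (crossLast p k) =
      brauerOp d (crossLast p (k + 1)) := by
  set a : Fin p := ⟨p - (k + 1), by omega⟩
  have ha : ¬ p - k ≤ a.val := by change ¬ p - k ≤ p - (k + 1); omega
  have ha' : p - (k + 1) ≤ a.val := le_rfl
  have hT : ∀ j ≠ a, (p - k ≤ j.val ↔ p - (k + 1) ≤ j.val) := fun j hj => by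
    have : j.val ≠ p - (k + 1) := Fin.val_ne_of_ne hj
    omega
  ext ⟨x, y⟩ ⟨u, v⟩
  -- the only intermediate configuration that contributes resets site `a` to `u a`, `v a`
  rw [Matrix.mul_apply,
    Fintype.sum_eq_single (Function.update x a (u a), Function.update y a (v a))]
  · rw [arc_apply, brauerOp_crossLast_apply, brauerOp_crossLast_apply, ite_zero_mul_ite_zero,
      one_mul]
    refine if_congr ⟨?_, ?_⟩ rfl rfl
    · rintro ⟨⟨hxy, huv, -, -⟩, h⟩ j
      by_cases hj : j = a
      · subst hj; simp only [Function.update_self] at huv; simpa [ha'] using ⟨hxy, huv⟩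
      · simpa [hj, hT j hj] using h j
    · intro h
      have haa := h a
      rw [if_pos ha'] at haa
      refine ⟨⟨haa.1, by simpa using haa.2, fun j hj => (Function.update_of_ne hj _ _).symm,
        fun j hj => (Function.update_of_ne hj _ _).symm⟩, fun j => ?_⟩
      by_cases hj : j = a
      · subst hj; simp [ha]
      · simpa [hj, hT j hj] using h j
  · rintro ⟨w, z⟩ hwz
    rw [arc_apply, brauerOp_crossLast_apply, ite_zero_mul_ite_zero, if_neg]
    rintro ⟨⟨-, -, hxw, hyz⟩, h⟩
    have hwa := h a
    rw [if_neg ha] at hwa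
    refine hwz (Prod.ext (funext fun j => ?_) (funext fun j => ?_)) <;> by_cases hj : j = a
    · subst hj; simpa using hwa.1
    · simpa [hj] using (hxw j hj).symm
    · subst hj; simpa using hwa.2
    · simpa [hj] using (hyz j hj).symm

lemma Vop_zero : Vop d p 0 = 1 := by
  simp [Vop, List.filter_le_range]

lemma Vop_succ {k : ℕ} (hk : k < p) :
    Vop d p (k + 1) = arc d p ⟨p - (k + 1), by omega⟩ ⟨p - (k + 1), by omega⟩ * Vop d p k := by
  rw [Vop, Vop, List.filter_le_range, List.filter_le_range,
    show p - (p - (k + 1)) = p - (p - k) + 1 by omega, List.range'_succ,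
    show p - (k + 1) + 1 = p - k by omega, List.map_cons, List.prod_cons,
    dif_pos (show p - (k + 1) < p by omega)]

lemma Vop_eq_brauerOp_crossLast {k : ℕ} (hk : k ≤ p) :
    Vop d p k = brauerOp d (crossLast p k) := by
  induction k with
  | zero => rw [Vop_zero, crossLast_zero, brauerOp_one]
  | succ k ih => rw [Vop_succ hk, ih (by omega), arc_mul_brauerOp_crossLast hk]

lemma exists_eq_sumCongr_mul_crossLast_mul_sumCongr (ρ : Perm (Fin p ⊕ Fin p)) :
    ∃ k ≤ p, ∃ a b c e : Perm (Fin p),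
      ρ = Perm.sumCongr a b * crossLast p k * Perm.sumCongr c e := by
  -- `k` strands cross the wall; `c` and `e` move them to the last `k` positions on both sides,
  -- after which uncrossing them leaves a permutation preserving the two sides
  set k := Fintype.card {j // (ρ (.inl j)).isRight}
  have hk : k ≤ p := by simpa using Fintype.card_subtype_le fun j => (ρ (.inl j)).isRight
  obtain ⟨c, hc⟩ := Perm.exists_forall_apply_iff (P := fun j : Fin p => p - k ≤ j.val)
    (Q := fun j => (ρ (.inl j)).isRight) (by rw [Fin.card_subtype_le_val]; omega)
  obtain ⟨e, he⟩ := Perm.exists_forall_apply_iff (P := fun j : Fin p => p - k ≤ j.val)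
    (Q := fun j => (ρ (.inr j)).isLeft)
    (by rw [Fin.card_subtype_le_val, ρ.card_isLeft_inr_eq]; omega)
  have hmaps : Set.MapsTo ⇑(ρ * Perm.sumCongr c e * crossLast p k)
      (Set.range .inl) (Set.range .inl) := by
    rintro _ ⟨j, rfl⟩
    rw [Perm.mul_apply, crossLast_inl]
    split_ifs with hj
    · obtain ⟨i, hi⟩ := Sum.isLeft_iff.1 ((he j).2 hj)
      exact ⟨i, hi.symm⟩
    · obtain ⟨i, hi⟩ := Sum.isLeft_iff.1 (Sum.not_isRight.1 (mt (hc j).1 hj))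
      exact ⟨i, hi.symm⟩
  obtain ⟨⟨a, b⟩, hab⟩ := Perm.mem_sumCongrHom_range_of_perm_mapsTo_inl hmaps
  refine ⟨k, hk, a, b, c⁻¹, e⁻¹, ?_⟩
  rw [Perm.sumCongrHom_apply] at hab
  rw [← Perm.sumCongr_inv, hab]
  nth_rw 2 [← crossLast_inv]
  group

lemma sum_Qop_Icc {k : ℕ} (hk : k ≤ p) :
    ∑ j ∈ Finset.Icc k p, Qop d p j = ((d : ℂ) ^ k)⁻¹ • Vop d p k := by
  induction hk using Nat.decreasingInduction with
  | self => rw [Finset.Icc_self, Finset.sum_singleton, Qop, if_pos rfl]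
  | of_succ k hk ih =>
    rw [← Finset.insert_Icc_add_one_left_eq_Icc hk.le, Finset.sum_insert (by simp), ih, Qop,
      if_neg hk.ne, sub_add_cancel]

lemma span_Qop_eq_span_Vop (hd : d ≠ 0) :
    Submodule.span ℂ (Qop d p '' Set.Iic p) = Submodule.span ℂ (Vop d p '' Set.Iic p) := by
  apply le_antisymm <;> rw [Submodule.span_le] <;> rintro _ ⟨k, hk, rfl⟩ <;>
    rw [Set.mem_Iic] at hk
  · rw [Qop]
    split_ifs with hkp
    · exact Submodule.smul_mem _ _ (Submodule.subset_span ⟨p, Set.self_mem_Iic, rfl⟩)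
    · exact Submodule.sub_mem _ (Submodule.smul_mem _ _ (Submodule.subset_span ⟨k, hk, rfl⟩))
        (Submodule.smul_mem _ _ (Submodule.subset_span ⟨k + 1, Set.mem_Iic.2 (by omega), rfl⟩))
  · have hVop : Vop d p k = ((d : ℂ) ^ k) • ∑ j ∈ Finset.Icc k p, Qop d p j := by
      rw [sum_Qop_Icc hk, smul_inv_smul₀ (pow_ne_zero _ (Nat.cast_ne_zero.2 hd))]
    rw [hVop]
    exact Submodule.smul_mem _ _ (Submodule.sum_mem _ fun j hj =>
      Submodule.subset_span ⟨j, (Finset.mem_Icc.1 hj).2, rfl⟩)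

/-- `M ↦ V_σ V'_τ M V_π V'_ρ` for `g = ((σ, τ), (π, ρ))`. -/
noncomputable def sandwich (d : ℕ)
    (g : (Perm (Fin p) × Perm (Fin p)) × (Perm (Fin p) × Perm (Fin p))) : Op d p →ₗ[ℂ] Op d p :=
  LinearMap.mulLeftRight ℂ (VL d p g.1.1 * VR d p g.1.2, VL d p g.2.1 * VR d p g.2.2)

lemma range_brauerOp_eq_iUnion_sandwich_Vop :
    Set.range (brauerOp d) = ⋃ g, sandwich d g '' (Vop d p '' Set.Iic p) := by
  ext M
  simp only [Set.mem_range, Set.mem_iUnion, Set.image_image, Set.mem_image, Set.mem_Iic,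
    sandwich, LinearMap.mulLeftRight_apply]
  constructor
  · rintro ⟨ρ, rfl⟩
    obtain ⟨k, hk, a, b, c, e, rfl⟩ := exists_eq_sumCongr_mul_crossLast_mul_sumCongr ρ
    refine ⟨((a, e⁻¹), (c, b⁻¹)), k, hk, ?_⟩
    rw [Vop_eq_brauerOp_crossLast hk, sandwich_brauerOp, inv_inv, inv_inv]
  · rintro ⟨g, k, hk, rfl⟩
    exact ⟨_, by rw [Vop_eq_brauerOp_crossLast hk, sandwich_brauerOp]⟩

theorem Apt_spanned_by_Q_general (d p : ℕ) (hd : 2 ≤ d) :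
    Apt d p = Submodule.span ℂ
      {M : Op d p | ∃ k, k ≤ p ∧ ∃ σ τ π ρ : Equiv.Perm (Fin p),
        M = VL d p σ * VR d p τ * Qop d p k * (VL d p π * VR d p ρ)} := by
  have hQ : {M : Op d p | ∃ k, k ≤ p ∧ ∃ σ τ π ρ : Equiv.Perm (Fin p),
      M = VL d p σ * VR d p τ * Qop d p k * (VL d p π * VR d p ρ)} =
      ⋃ g, sandwich d g '' (Qop d p '' Set.Iic p) := by
    ext M
    simp only [Set.mem_iUnion, Set.image_image, Set.mem_image, Set.mem_Iic, sandwich,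
      LinearMap.mulLeftRight_apply, Prod.exists]
    exact ⟨fun ⟨k, hk, σ, τ, π, ρ, h⟩ => ⟨σ, τ, π, ρ, k, hk, h.symm⟩,
      fun ⟨σ, τ, π, ρ, k, hk, h⟩ => ⟨k, hk, σ, τ, π, ρ, h.symm⟩⟩
  rw [Apt_eq_span_brauerOp, range_brauerOp_eq_iUnion_sandwich_Vop, hQ]
  exact Submodule.span_iUnion_image_congr _ (span_Qop_eq_span_Vop (by omega)).symm

/-- `A^d_{p,p}` is spanned by the sandwiched projectors
`(V_σ V'_τ) Q^(k) (V_π V'_ρ)`, `0 ≤ k ≤ p`, `σ,τ,π,ρ ∈ S_p`. -/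
theorem Apt_spanned_by_Q (d p : ℕ) (hd : 2 ≤ d) (hp : 1 ≤ p) :
    Apt d p = Submodule.span ℂ
      {M : Op d p | ∃ k, k ≤ p ∧ ∃ σ τ π ρ : Equiv.Perm (Fin p),
        M = VL d p σ * VR d p τ * Qop d p k * (VL d p π * VR d p ρ)} :=
  Apt_spanned_by_Q_general d p hd

end WBA
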